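/- If X̃₁ and X̃₂ are fuzzy incidence graphs in which every pair is effective, then their Cartesian product X̃ = X̃₁ × X̃₂ is a fuzzy incidence graph in which every pair is effective. -/

import Mathlib

open scoped BigOperators

/-- A fuzzy incidence graph on a finite vertex type `V`.  An (undirected, loopless) edge `xy`
is encoded by the symmetric membership function `rho`, and the incidence pair `(x, xy)`
is encoded by `eta x y` (so `eta x y` is the membership value of the pair consisting of the
vertex `x` and the edge joining `x` and `y`). All membership values lie in `[0,1]`,
`rho xy ≤ min (eps x) (eps y)` and `eta (x, xy) ≤ min (eps x) (rho xy)`. -/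
structure FIG (V : Type) [Fintype V] [DecidableEq V] where
  eps : V → ℝ
  rho : V → V → ℝ
  eta : V → V → ℝ
  eps_nonneg : ∀ x, 0 ≤ eps x
  eps_le_one : ∀ x, eps x ≤ 1
  rho_nonneg : ∀ x y, 0 ≤ rho x y
  rho_symm : ∀ x y, rho x y = rho y x
  rho_le : ∀ x y, rho x y ≤ min (eps x) (eps y)
  rho_irrefl : ∀ x, rho x x = 0
  eta_nonneg : ∀ x y, 0 ≤ eta x y
  eta_le : ∀ x y, eta x y ≤ min (eps x) (rho x y)

namespace FIG

variable {V V₁ V₂ : Type} [Fintype V] [DecidableEq V]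
  [Fintype V₁] [DecidableEq V₁] [Fintype V₂] [DecidableEq V₂]

/-- `(x, xy)` is a pair of the fuzzy incidence graph (i.e. belongs to the support `η*`). -/
def IsPair (G : FIG V) (x y : V) : Prop := 0 < G.eta x y

/-- the minimum of the two pair weights along one edge step of an incidence path -/
def pairMin (G : FIG V) (a b : V) : ℝ := min (G.eta a b) (G.eta b a)

/-- the minimum of the pair weights along the internal steps of a vertex list -/
def chainStrength (G : FIG V) : List V → ℝ
  | [] => 1
  | [_] => 1
  | a :: b :: l => min (G.pairMin a b) (G.chainStrength (b :: l))

/-- The set of incidence strengths of incidence paths from the vertex `x` to the edge `yz`: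
a path is recorded by its (pairwise distinct) sequence of vertices, starting at `x` and ending
at an endpoint of the edge `yz`; its strength is the minimum of the weights of its pairs
(pairs of weight `0` are not genuine pairs, but a list using them has strength `0`, so
including such lists does not alter the supremum below). -/
def pathStrengths (G : FIG V) (x y z : V) : Set ℝ :=
  {s | ∃ l : List V, l.Nodup ∧ l.head? = some x ∧
      ((l.getLast? = some y ∧ s = min (G.chainStrength l) (G.eta y z)) ∨
       (l.getLast? = some z ∧ s = min (G.chainStrength l) (G.eta z y)))}

/-- `ICONN G x y z` is the greatest incidence strength of an incidence path from the
vertex `x` to the edge `yz` (the incidence connectivity `ICONN_G (x, yz)`). -/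
noncomputable def ICONN (G : FIG V) (x y z : V) : ℝ := sSup (G.pathStrengths x y z)

/-- the fuzzy incidence graph obtained by deleting the pair `(a, ab)` -/
def deletePair (G : FIG V) (a b : V) : FIG V where
  eps := G.eps
  rho := G.rho
  eta := fun u v => if u = a ∧ v = b then 0 else G.eta u v
  eps_nonneg := G.eps_nonneg
  eps_le_one := G.eps_le_one
  rho_nonneg := G.rho_nonneg
  rho_symm := G.rho_symm
  rho_le := G.rho_le
  rho_irrefl := G.rho_irrefl
  eta_nonneg := by
    intro u v; (try dsimp only); split
    · exact le_refl 0
    · exact G.eta_nonneg u v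
  eta_le := by
    intro u v; (try dsimp only); split
    · exact le_min (G.eps_nonneg u) (G.rho_nonneg u v)
    · exact G.eta_le u v

/-- The pair `(x, xy)` is strong: its weight is at least the incidence connectivity
between `x` and the edge `xy` in the graph obtained by deleting the pair `(x, xy)`. -/
def IsStrongPair (G : FIG V) (x y : V) : Prop :=
  (G.deletePair x y).ICONN x x y ≤ G.eta x y

/-- a strong fuzzy incidence graph: every pair is strong -/
def Strong (G : FIG V) : Prop := ∀ x y, G.IsPair x y → G.IsStrongPair x y

/-- The pair `(x, xy)` is effective: `η(x, xy) = min (ε x) (ρ xy)`. -/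
def EffectivePair (G : FIG V) (x y : V) : Prop :=
  G.eta x y = min (G.eps x) (G.rho x y)

/-- a fuzzy incidence graph in which every pair is effective -/
def EffectivePairs (G : FIG V) : Prop := ∀ x y, G.IsPair x y → G.EffectivePair x y

/-- The Cartesian product of two fuzzy incidence graphs: `(a₁,b₁)(a₂,b₂)` is an edge
when `a₁ = a₂` and `b₁b₂ ∈ E₂`, or `b₁ = b₂` and `a₁a₂ ∈ E₁`; a pair of the product
exists when both corresponding pairs of the factor exist. -/
noncomputable def cartesian (G₁ : FIG V₁) (G₂ : FIG V₂) : FIG (V₁ × V₂) where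
  eps := fun p => min (G₁.eps p.1) (G₂.eps p.2)
  rho := fun p q =>
    if p.1 = q.1 then min (G₁.eps p.1) (G₂.rho p.2 q.2)
    else if p.2 = q.2 then min (G₁.rho p.1 q.1) (G₂.eps p.2)
    else 0
  eta := fun p q =>
    if p.1 = q.1 then
      (if 0 < G₂.eta p.2 q.2 ∧ 0 < G₂.eta q.2 p.2 then
        min (G₁.eps p.1) (G₂.eta p.2 q.2) else 0)
    else if p.2 = q.2 then
      (if 0 < G₁.eta p.1 q.1 ∧ 0 < G₁.eta q.1 p.1 then
        min (G₁.eta p.1 q.1) (G₂.eps p.2) else 0)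
    else 0
  eps_nonneg := fun p => le_min (G₁.eps_nonneg p.1) (G₂.eps_nonneg p.2)
  eps_le_one := fun p => min_le_of_left_le (G₁.eps_le_one p.1)
  rho_nonneg := by
    intro p q; (try dsimp only); split
    · exact le_min (G₁.eps_nonneg _) (G₂.rho_nonneg _ _)
    · split
      · exact le_min (G₁.rho_nonneg _ _) (G₂.eps_nonneg _)
      · exact le_refl 0
  rho_symm := by
    intro p q; (try dsimp only)
    by_cases h1 : p.1 = q.1
    · simp [h1, G₂.rho_symm p.2 q.2]
    · by_cases h2 : p.2 = q.2
      · simp [h1, Ne.symm h1, h2, G₁.rho_symm p.1 q.1]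
      · simp [h1, Ne.symm h1, h2, Ne.symm h2]
  rho_le := by
    intro p q; (try dsimp only); split
    · rename_i h1
      refine le_min (le_min (min_le_left _ _) (min_le_of_right_le ?_))
        (le_min (h1 ▸ min_le_left _ _) (min_le_of_right_le ?_))
      · exact le_trans (G₂.rho_le p.2 q.2) (min_le_left _ _)
      · exact le_trans (G₂.rho_le p.2 q.2) (min_le_right _ _)
    · split
      · rename_i h1 h2
        refine le_min (le_min (min_le_of_left_le ?_) (min_le_right _ _))
          (le_min (min_le_of_left_le ?_) (h2 ▸ min_le_right _ _))
        · exact le_trans (G₁.rho_le p.1 q.1) (min_le_left _ _)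
        · exact le_trans (G₁.rho_le p.1 q.1) (min_le_right _ _)
      · exact le_min (le_min (G₁.eps_nonneg _) (G₂.eps_nonneg _))
          (le_min (G₁.eps_nonneg _) (G₂.eps_nonneg _))
  rho_irrefl := by
    intro p; (try dsimp only)
    rw [if_pos rfl, G₂.rho_irrefl]
    exact min_eq_right (G₁.eps_nonneg p.1)
  eta_nonneg := by
    intro p q; (try dsimp only); split
    · split
      · exact le_min (G₁.eps_nonneg _) (G₂.eta_nonneg _ _)
      · exact le_refl 0
    · split
      · split
        · exact le_min (G₁.eta_nonneg _ _) (G₂.eps_nonneg _)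
        · exact le_refl 0
      · exact le_refl 0
  eta_le := by
    intro p q; (try dsimp only); split
    · split
      · refine le_min (le_min (min_le_left _ _) (min_le_of_right_le ?_))
          (le_min (min_le_left _ _) (min_le_of_right_le ?_))
        · exact le_trans (G₂.eta_le p.2 q.2) (min_le_left _ _)
        · exact le_trans (G₂.eta_le p.2 q.2) (min_le_right _ _)
      · exact le_min (le_min (G₁.eps_nonneg _) (G₂.eps_nonneg _))
          (le_min (G₁.eps_nonneg _) (G₂.rho_nonneg _ _))
    · split
      · split
        · refine le_min (le_min (min_le_of_left_le ?_) (min_le_right _ _))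
            (le_min (min_le_of_left_le ?_) (min_le_right _ _))
          · exact le_trans (G₁.eta_le p.1 q.1) (min_le_left _ _)
          · exact le_trans (G₁.eta_le p.1 q.1) (min_le_right _ _)
        · exact le_min (le_min (G₁.eps_nonneg _) (G₂.eps_nonneg _))
            (le_min (G₁.rho_nonneg _ _) (G₂.eps_nonneg _))
      · exact le_min (le_min (G₁.eps_nonneg _) (G₂.eps_nonneg _)) (le_refl 0)

theorem IsPair.ne {G : FIG V} {x y : V} (h : G.IsPair x y) : x ≠ y := by
  rintro rfl
  have hle : G.eta x x ≤ 0 := G.rho_irrefl x ▸ (G.eta_le x x).trans (min_le_right _ _)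
  exact (h.trans_le hle).false

section Cartesian

variable {G₁ : FIG V₁} {G₂ : FIG V₂} {p q : V₁ × V₂}

theorem cartesian_eps (p : V₁ × V₂) :
    (G₁.cartesian G₂).eps p = min (G₁.eps p.1) (G₂.eps p.2) := rfl

theorem cartesian_rho_of_fst_eq (h : p.1 = q.1) :
    (G₁.cartesian G₂).rho p q = min (G₁.eps p.1) (G₂.rho p.2 q.2) := if_pos h

theorem cartesian_rho_of_snd_eq (h : p.2 = q.2) :
    (G₁.cartesian G₂).rho p q = min (G₁.rho p.1 q.1) (G₂.eps p.2) := by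
  by_cases h₁ : p.1 = q.1
  · simp [cartesian, h₁, h, rho_irrefl, eps_nonneg]
  · simp [cartesian, h₁, h]

theorem cartesian_eta_of_fst_eq (h : p.1 = q.1)
    (hpq : G₂.IsPair p.2 q.2) (hqp : G₂.IsPair q.2 p.2) :
    (G₁.cartesian G₂).eta p q = min (G₁.eps p.1) (G₂.eta p.2 q.2) := by
  simp only [cartesian, if_pos h]
  exact if_pos ⟨hpq, hqp⟩

theorem cartesian_eta_of_snd_eq (h : p.2 = q.2)
    (hpq : G₁.IsPair p.1 q.1) (hqp : G₁.IsPair q.1 p.1) :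
    (G₁.cartesian G₂).eta p q = min (G₁.eta p.1 q.1) (G₂.eps p.2) := by
  simp only [cartesian, if_neg hpq.ne, if_pos h]
  exact if_pos ⟨hpq, hqp⟩

theorem isPair_cartesian (h : (G₁.cartesian G₂).IsPair p q) :
    (p.1 = q.1 ∧ G₂.IsPair p.2 q.2 ∧ G₂.IsPair q.2 p.2) ∨
      (p.2 = q.2 ∧ G₁.IsPair p.1 q.1 ∧ G₁.IsPair q.1 p.1) := by
  unfold IsPair cartesian at *
  dsimp only at h
  split_ifs at h <;> first | exact (lt_irrefl 0 h).elim | tauto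

theorem effectivePair_cartesian_of_fst_eq (h : p.1 = q.1)
    (hpq : G₂.IsPair p.2 q.2) (hqp : G₂.IsPair q.2 p.2) (he : G₂.EffectivePair p.2 q.2) :
    (G₁.cartesian G₂).EffectivePair p q := by
  rw [EffectivePair, cartesian_eta_of_fst_eq h hpq hqp, cartesian_rho_of_fst_eq h, he,
    cartesian_eps]
  exact inf_inf_distrib_left _ _ _

theorem effectivePair_cartesian_of_snd_eq (h : p.2 = q.2)
    (hpq : G₁.IsPair p.1 q.1) (hqp : G₁.IsPair q.1 p.1) (he : G₁.EffectivePair p.1 q.1) :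
    (G₁.cartesian G₂).EffectivePair p q := by
  rw [EffectivePair, cartesian_eta_of_snd_eq h hpq hqp, cartesian_rho_of_snd_eq h, he,
    cartesian_eps]
  exact inf_inf_distrib_right _ _ _

end Cartesian

/-- **Proposition 21.** The Cartesian product of two fuzzy incidence graphs with
effective pairs is a fuzzy incidence graph with effective pairs. -/
theorem cartesian_effectivePairs (G₁ : FIG V₁) (G₂ : FIG V₂)
    (h₁ : G₁.EffectivePairs) (h₂ : G₂.EffectivePairs) :
    (G₁.cartesian G₂).EffectivePairs := by
  intro p q hpq
  rcases isPair_cartesian hpq with ⟨h, hpq₂, hqp₂⟩ | ⟨h, hpq₁, hqp₁⟩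
  · exact effectivePair_cartesian_of_fst_eq h hpq₂ hqp₂ (h₂ _ _ hpq₂)
  · exact effectivePair_cartesian_of_snd_eq h hpq₁ hqp₁ (h₁ _ _ hpq₁)

end FIG
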